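/- For k ∈ ℂ, let η_k be the totally antisymmetric array determined by η_k(1,2,3) = 1 and η_k(4,5,6) = k (all entries not obtained from these two by permutations being zero). Then η_k is effective and q(η_k) = 2k·S, where S is the symmetric block matrix [[0, I₃],[I₃, 0]]. In particular, for every k ≠ 0 the matrix q(η_k) has rank 6, and all the arrays η_k with k ≠ 0 have proportional KLR contractions: these arrays constitute the fiber of the projectivized moment map through the generic Monge–Ampère equation det(u_{ij}) = const, and the fiber is compactified by the two points k = 0 and k = ∞ lying in the Lagrangian Grassmannian. -/

import Mathlib

open scoped Matrix

noncomputable section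

/-- The matrix `J = [[0, I₃], [-I₃, 0]]` of the standard symplectic form on `ℂ⁶`. -/
def J : Matrix (Fin 6) (Fin 6) ℂ :=
  Matrix.of fun i j => if (i : ℕ) + 3 = (j : ℕ) then 1 else if (j : ℕ) + 3 = (i : ℕ) then -1 else 0

/-- The matrix `W = -J`, so `W(i, i+3) = -1` and `W(i+3, i) = 1` for `i = 1, 2, 3`. -/
def W : Matrix (Fin 6) (Fin 6) ℂ := -J

/-- A totally antisymmetric array `η : {1,…,6}³ → ℂ`: it changes sign under the
transposition of any two of its three arguments. -/
def IsAlt (η : Fin 6 → Fin 6 → Fin 6 → ℂ) : Prop :=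
  (∀ i j k, η j i k = -η i j k) ∧ (∀ i j k, η i k j = -η i j k) ∧
    (∀ i j k, η k j i = -η i j k)

/-- An array `η` is effective if `Σ_{i,j} W(i,j) · η(i,j,k) = 0` for every `k`. -/
def IsEff (η : Fin 6 → Fin 6 → Fin 6 → ℂ) : Prop :=
  ∀ k, (∑ i, ∑ j, W i j * η i j k) = 0

/-- The KLR contraction of a `3`-form `η`: the symmetric `6 × 6` matrix with entries
`q(η)(a,b) = Σ_{i,j,h,k} η(a,i,j) · η(b,h,k) · W(i,h) · W(j,k)`. -/
def klr (η : Fin 6 → Fin 6 → Fin 6 → ℂ) : Matrix (Fin 6) (Fin 6) ℂ :=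
  Matrix.of fun a b => ∑ i, ∑ j, ∑ h, ∑ k, η a i j * η b h k * W i h * W j k

/-- The standard symplectic form `ω(u, v) = uᵀ J v` on `ℂ⁶`. -/
def omg (u v : Fin 6 → ℂ) : ℂ := ∑ i, ∑ j, u i * J i j * v j

/-- The Plücker array of vectors `v₁, v₂, v₃ ∈ ℂ⁶`: its `(i,j,k)` entry is the
determinant of the `3 × 3` matrix whose `m`-th row is `((v_m)_i, (v_m)_j, (v_m)_k)`. -/
def plk (v : Fin 3 → Fin 6 → ℂ) : Fin 6 → Fin 6 → Fin 6 → ℂ :=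
  fun i j k => Matrix.det (Matrix.of fun m n => v m (![i, j, k] n))

/-- The `m`-th standard basis vector of `ℂ⁶`. -/
def stdv (m : Fin 6) : Fin 6 → ℂ := fun i => if i = m then 1 else 0

/-- The totally antisymmetric array `η_k` determined by `η_k(1,2,3) = 1` and
`η_k(4,5,6) = k` (all entries not obtained from these two by permutations being
zero): it is the sum of the Plücker array of `e₁, e₂, e₃` and `k` times the Plücker
array of `e₄, e₅, e₆`. -/
def etaO (k : ℂ) : Fin 6 → Fin 6 → Fin 6 → ℂ :=
  fun i j l => plk ![stdv 0, stdv 1, stdv 2] i j l + k * plk ![stdv 3, stdv 4, stdv 5] i j l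

/-- The symmetric block matrix `S = [[0, I₃], [I₃, 0]]`. -/
def Sblk : Matrix (Fin 6) (Fin 6) ℂ :=
  Matrix.of fun i j => if (i : ℕ) + 3 = (j : ℕ) ∨ (j : ℕ) + 3 = (i : ℕ) then 1 else 0

/-!
`η_k = α + k β`, where `α` and `β` are the Plücker arrays of `e₁, e₂, e₃` and of `e₄, e₅, e₆`.
Plücker arrays are alternating, and effective as soon as the three vectors span an isotropic
subspace (expand the determinant along its last column), so both properties pass to `η_k` by
linearity. Since `W` is a signed permutation matrix pairing `i` with `i + 3`, every entry of the
KLR contraction collapses to 36 products `η(a,i,j) η(b,i+3,j+3)`, and evaluating them gives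
`q(η_k) = 2k S`. Finally `S² = 1`, so `2k S` is invertible for `k ≠ 0`.
-/

theorem isAlt_plk (v : Fin 3 → Fin 6 → ℂ) : IsAlt (plk v) := by
  refine ⟨fun i j l => ?_, fun i j l => ?_, fun i j l => ?_⟩ <;>
  · simp only [plk, Matrix.det_fin_three, Matrix.of_apply, Matrix.cons_val]
    ring

theorem IsAlt.add_const_mul {η η' : Fin 6 → Fin 6 → Fin 6 → ℂ} (h : IsAlt η) (h' : IsAlt η')
    (c : ℂ) : IsAlt fun i j l => η i j l + c * η' i j l := by
  refine ⟨fun i j l => ?_, fun i j l => ?_, fun i j l => ?_⟩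
  · beta_reduce; rw [h.1, h'.1]; ring
  · beta_reduce; rw [h.2.1, h'.2.1]; ring
  · beta_reduce; rw [h.2.2, h'.2.2]; ring

theorem IsEff.add_const_mul {η η' : Fin 6 → Fin 6 → Fin 6 → ℂ} (h : IsEff η) (h' : IsEff η')
    (c : ℂ) : IsEff fun i j l => η i j l + c * η' i j l := by
  intro l
  simp only [mul_add, Finset.sum_add_distrib, mul_left_comm _ c, ← Finset.mul_sum, h l, h' l,
    mul_zero, add_zero]

theorem sum_W_mul_plk (v : Fin 3 → Fin 6 → ℂ) (l : Fin 6) :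
    ∑ i, ∑ j, W i j * plk v i j l =
      v 0 l * (omg (v 2) (v 1) - omg (v 1) (v 2)) + v 1 l * (omg (v 0) (v 2) - omg (v 2) (v 0)) +
        v 2 l * (omg (v 1) (v 0) - omg (v 0) (v 1)) := by
  simp only [omg, Finset.mul_sum, ← Finset.sum_sub_distrib, ← Finset.sum_add_distrib]
  refine Finset.sum_congr rfl fun i _ => Finset.sum_congr rfl fun j _ => ?_
  simp only [W, plk, Matrix.det_fin_three, Matrix.of_apply, Matrix.cons_val, Matrix.neg_apply]
  ring

theorem isEff_plk_of_isotropic (v : Fin 3 → Fin 6 → ℂ) (hv : ∀ m n, omg (v m) (v n) = 0) :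
    IsEff (plk v) := fun l => by
  simp only [sum_W_mul_plk, hv, sub_zero, mul_zero, add_zero]

theorem omg_stdv (a b : Fin 6) : omg (stdv a) (stdv b) = J a b := by
  simp [omg, stdv]

theorem isAlt_etaO (k : ℂ) : IsAlt (etaO k) :=
  (isAlt_plk _).add_const_mul (isAlt_plk _) k

theorem isEff_etaO (k : ℂ) : IsEff (etaO k) := by
  refine (isEff_plk_of_isotropic _ ?_).add_const_mul (isEff_plk_of_isotropic _ ?_) k <;>
  · intro m n
    fin_cases m <;> fin_cases n <;> simp [omg_stdv, J]

theorem sum_W_mul (i : Fin 6) (f : Fin 6 → ℂ) : ∑ h, W i h * f h = W i (i + 3) * f (i + 3) := by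
  refine Finset.sum_eq_single _ (fun h _ hh => ?_) (by simp)
  suffices W i h = 0 by rw [this, zero_mul]
  fin_cases i <;> fin_cases h <;> simp_all [W, J]

theorem W_self_add_three (i : Fin 6) : W i (i + 3) = if (i : ℕ) < 3 then -1 else 1 := by
  fin_cases i <;> simp [W, J]

theorem klr_apply (η : Fin 6 → Fin 6 → Fin 6 → ℂ) (a b : Fin 6) :
    klr η a b = ∑ i, ∑ j, W i (i + 3) * W j (j + 3) * η a i j * η b (i + 3) (j + 3) := by
  simp only [klr, Matrix.of_apply]
  refine Finset.sum_congr rfl fun i _ => Finset.sum_congr rfl fun j _ => ?_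
  calc ∑ h, ∑ l, η a i j * η b h l * W i h * W j l
      = ∑ h, W i h * ∑ l, W j l * (η a i j * η b h l) := by
        simp only [Finset.mul_sum]; congr! 2; ring
    _ = _ := by simp only [sum_W_mul]; ring

theorem klr_etaO (k : ℂ) : klr (etaO k) = (2 * k) • Sblk := by
  ext a b
  rw [klr_apply]
  fin_cases a <;> fin_cases b <;>
  · simp [Fin.sum_univ_six, W_self_add_three, etaO, plk, Matrix.det_fin_three, stdv, Sblk, two_mul]

theorem Sblk_mul_self : Sblk * Sblk = 1 := by
  ext a b
  fin_cases a <;> fin_cases b <;> simp [Matrix.mul_apply, Fin.sum_univ_six, Sblk]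

theorem rank_smul_of_mul_self_eq_one {n K : Type*} [Fintype n] [DecidableEq n] [Field K]
    {A : Matrix n n K} (hA : A * A = 1) {c : K} (hc : c ≠ 0) :
    (c • A).rank = Fintype.card n := by
  refine Matrix.rank_of_isUnit _ (IsUnit.of_mul_eq_one (c⁻¹ • A) ?_)
  rw [smul_mul_smul_comm, hA, mul_inv_cancel₀ hc, one_smul]

/-- The array `η_k` with `η_k(1,2,3) = 1`, `η_k(4,5,6) = k` is effective and
`q(η_k) = 2k · [[0, I₃], [I₃, 0]]`; in particular for `k ≠ 0` the matrix `q(η_k)` has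
rank `6`, and all the arrays `η_k`, `k ≠ 0`, have proportional KLR contractions:
they constitute the fiber of the projectivized moment map through the generic
Monge–Ampère equation `det(u_{ij}) = const`. -/
theorem statement_17 :
    (∀ k : ℂ, etaO k 0 1 2 = 1 ∧ etaO k 3 4 5 = k ∧
      IsAlt (etaO k) ∧ IsEff (etaO k) ∧ klr (etaO k) = (2 * k) • Sblk) ∧
    (∀ k : ℂ, k ≠ 0 → (klr (etaO k)).rank = 6) := by
  refine ⟨fun k => ⟨?_, ?_, isAlt_etaO k, isEff_etaO k, klr_etaO k⟩, fun k hk => ?_⟩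
  · simp [etaO, plk, Matrix.det_fin_three, stdv]
  · simp [etaO, plk, Matrix.det_fin_three, stdv]
  · rw [klr_etaO, rank_smul_of_mul_self_eq_one Sblk_mul_self (mul_ne_zero two_ne_zero hk),
      Fintype.card_fin]
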